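/- arXiv:2006.06126 — 2 statements merged into one kernel-verified Lean document; each statement's English description precedes it below -/
import Mathlib

section
/- Let v_1, …, v_n be vectors in ℍ^d with synthesis matrix V = [v_1, …, v_n] ∈ ℍ^{d×n}. The following are equivalent: (i) ∑_j |⟨x, v_j⟩|² = ‖x‖² for all x ∈ ℍ^d (normalised tight frame); (ii) x = ∑_j v_j·⟨x, v_j⟩ for all x ∈ ℍ^d, equivalently V·Vᴴ = I_d; (iii) the Plancherel identity ⟨x,y⟩ = ∑_j ⟨v_j, y⟩·⟨x, v_j⟩ holds for all x, y ∈ ℍ^d; (iv) the Gramian P := Vᴴ·V satisfies P² = P, Pᴴ = P, and Re(trace(P)) = d. -/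
/-!
Write `S = V Vᴴ` for the frame operator. The sums in (i), (ii) and (iii) are `‖Vᴴ x‖²`, `S x`
and `⟨S x, y⟩`, so (ii) and (iii) both say `S = 1`, while (i) says that `Vᴴ` is an isometry,
which by real polarisation gives `Re ⟨S x, y⟩ = Re ⟨x, y⟩` and hence `S = 1`. For (iv), the
idempotence of `P = Vᴴ V` makes `(V P - V)ᴴ (V P - V) = P³ - 2P² + P` vanish, so `S V = V` and
`S` is a Hermitian idempotent; its real trace is `Re tr P = d`, so `1 - S` is a Hermitian
idempotent of real trace `0`, i.e. of Frobenius norm `0`.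
-/

open Quaternion Matrix BigOperators

/-- Euclidean inner product on `ℍ^d`: `⟨v,w⟩ = ∑ i, conj (w i) * v i`
(linear in the first variable). -/
noncomputable def qip {d : ℕ} (v w : Fin d → ℍ[ℝ]) : ℍ[ℝ] :=
  ∑ i, star (w i) * v i

/-- Squared Euclidean norm on `ℍ^d`, a nonnegative real. -/
noncomputable def nsq {d : ℕ} (v : Fin d → ℍ[ℝ]) : ℝ :=
  ∑ i, Quaternion.normSq (v i)

namespace Quaternion

variable {R : Type*} [CommRing R]

theorem re_sum {ι : Type*} (s : Finset ι) (f : ι → ℍ[R]) :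
    (∑ i ∈ s, f i).re = ∑ i ∈ s, (f i).re :=
  map_sum (QuaternionAlgebra.reₗ (-1) 0 (-1)) f s

theorem re_mul_comm (p q : ℍ[R]) : (p * q).re = (q * p).re := by
  simp only [re_mul]; ring

end Quaternion

namespace Matrix

variable {m n : Type*} [Fintype m] [Fintype n]

theorem re_trace_mul_comm {R : Type*} [CommRing R] (A : Matrix m n ℍ[R]) (B : Matrix n m ℍ[R]) :
    (A * B).trace.re = (B * A).trace.re := by
  simp only [trace, diag, mul_apply, Quaternion.re_sum]
  rw [Finset.sum_comm]
  exact Finset.sum_congr rfl fun _ _ => Finset.sum_congr rfl fun _ _ => re_mul_comm _ _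

theorem re_trace_conjTranspose_mul_self (M : Matrix m n ℍ[ℝ]) :
    (Mᴴ * M).trace.re = ∑ j, ∑ i, normSq (M i j) := by
  simp only [trace, diag, mul_apply, conjTranspose_apply, Quaternion.re_sum, star_mul_self,
    re_coe]

theorem eq_zero_of_re_trace_conjTranspose_mul_self_eq_zero {M : Matrix m n ℍ[ℝ]}
    (h : (Mᴴ * M).trace.re = 0) : M = 0 := by
  rw [re_trace_conjTranspose_mul_self, Fintype.sum_eq_zero_iff_of_nonneg
    (fun _ => Finset.sum_nonneg fun _ _ => normSq_nonneg)] at h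
  refine Matrix.ext fun i j => ?_
  have hj := congrFun h j
  rw [Pi.zero_apply, Fintype.sum_eq_zero_iff_of_nonneg (fun _ => normSq_nonneg)] at hj
  exact normSq_eq_zero.1 (congrFun hj i)

/-- `Matrix.conjTranspose_mul_self_eq_zero` needs a `StarOrderedRing`, which `ℍ[ℝ]` is not. -/
theorem conjTranspose_mul_self_eq_zero_iff' {M : Matrix m n ℍ[ℝ]} : Mᴴ * M = 0 ↔ M = 0 :=
  ⟨fun h => eq_zero_of_re_trace_conjTranspose_mul_self_eq_zero (by simp [h]),
    fun h => by simp [h]⟩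

theorem eq_one_of_isHermitian_of_mul_self_eq [DecidableEq n] {Q : Matrix n n ℍ[ℝ]}
    (hQ : Q.IsHermitian) (hQQ : Q * Q = Q) (htr : Q.trace.re = Fintype.card n) : Q = 1 := by
  have hcompl : (1 - Q)ᴴ * (1 - Q) = 1 - Q := by
    rw [conjTranspose_sub, conjTranspose_one, hQ.eq, sub_mul, mul_sub, mul_sub, hQQ]
    simp
  have h := eq_zero_of_re_trace_conjTranspose_mul_self_eq_zero (by
    rw [hcompl, trace_sub, trace_one, re_sub, htr]; simp)
  exact (sub_eq_zero.1 h).symm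

theorem mul_conjTranspose_mul_self_eq_self {V : Matrix m n ℍ[ℝ]}
    (hP : (Vᴴ * V) * (Vᴴ * V) = Vᴴ * V) : V * Vᴴ * V = V := by
  set P := Vᴴ * V
  have hW : (V * P - V)ᴴ * (V * P - V) = 0 := by
    have hPH : Pᴴ = P := by simp [P, conjTranspose_mul]
    calc (V * P - V)ᴴ * (V * P - V) = P * P * P - P * P - P * P + P := by
          rw [conjTranspose_sub, conjTranspose_mul, hPH]
          simp only [P, Matrix.sub_mul, Matrix.mul_sub, Matrix.mul_assoc]; abel
      _ = 0 := by rw [hP, hP]; abel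
  rw [conjTranspose_mul_self_eq_zero_iff', sub_eq_zero] at hW
  rw [Matrix.mul_assoc, hW]

end Matrix

section InnerProduct

variable {d : ℕ}

theorem qip_eq_star_dotProduct (x y : Fin d → ℍ[ℝ]) : qip x y = star y ⬝ᵥ x := rfl

theorem star_qip (x y : Fin d → ℍ[ℝ]) : star (qip x y) = qip y x := by
  rw [qip_eq_star_dotProduct, star_dotProduct, star_star, qip_eq_star_dotProduct]

theorem re_qip_comm (x y : Fin d → ℍ[ℝ]) : (qip x y).re = (qip y x).re := by
  rw [← star_qip, re_star]

theorem qip_add_left (x x' y : Fin d → ℍ[ℝ]) : qip (x + x') y = qip x y + qip x' y :=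
  dotProduct_add _ _ _

theorem qip_sub_left (x x' y : Fin d → ℍ[ℝ]) : qip (x - x') y = qip x y - qip x' y :=
  dotProduct_sub _ _ _

theorem qip_add_right (x y y' : Fin d → ℍ[ℝ]) : qip x (y + y') = qip x y + qip x y' := by
  simp only [qip_eq_star_dotProduct, star_add, add_dotProduct]

theorem re_qip_self (x : Fin d → ℍ[ℝ]) : (qip x x).re = nsq x := by
  simp only [qip, nsq, re_sum, star_mul_self, re_coe]

theorem nsq_eq_zero_iff {x : Fin d → ℍ[ℝ]} : nsq x = 0 ↔ x = 0 := by
  rw [nsq, Fintype.sum_eq_zero_iff_of_nonneg fun _ => normSq_nonneg, funext_iff, funext_iff]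
  simp only [Pi.zero_apply, normSq_eq_zero]

theorem nsq_add (x y : Fin d → ℍ[ℝ]) : nsq (x + y) = nsq x + nsq y + 2 * (qip x y).re := by
  simp only [← re_qip_self, qip_add_left, qip_add_right, re_add]
  rw [re_qip_comm y x]
  ring

theorem eq_of_forall_re_qip_eq {x x' : Fin d → ℍ[ℝ]} (h : ∀ y, (qip x y).re = (qip x' y).re) :
    x = x' := by
  rw [← sub_eq_zero, ← nsq_eq_zero_iff, ← re_qip_self, qip_sub_left, re_sub, h, sub_self]

theorem qip_mulVec_left {m : ℕ} (A : Matrix (Fin m) (Fin d) ℍ[ℝ]) (x : Fin d → ℍ[ℝ])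
    (y : Fin m → ℍ[ℝ]) : qip (A *ᵥ x) y = qip x (Aᴴ *ᵥ y) := by
  rw [qip_eq_star_dotProduct, qip_eq_star_dotProduct, dotProduct_mulVec, star_mulVec,
    conjTranspose_conjTranspose]

theorem re_qip_mulVec_mulVec {m : ℕ} {A : Matrix (Fin m) (Fin d) ℍ[ℝ]}
    (hA : ∀ x, nsq (A *ᵥ x) = nsq x) (x y : Fin d → ℍ[ℝ]) :
    (qip (A *ᵥ x) (A *ᵥ y)).re = (qip x y).re := by
  have h := hA (x + y)
  rw [mulVec_add, nsq_add, nsq_add, hA, hA] at h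
  linarith

end InnerProduct

section Frame

variable {d n : ℕ} (V : Matrix (Fin d) (Fin n) ℍ[ℝ])

theorem qip_col (x : Fin d → ℍ[ℝ]) (j : Fin n) : qip x (fun i => V i j) = (Vᴴ *ᵥ x) j := rfl

theorem sum_normSq_qip_col (x : Fin d → ℍ[ℝ]) :
    ∑ j, normSq (qip x (fun i => V i j)) = nsq (Vᴴ *ᵥ x) := rfl

theorem sum_mul_qip_col (x : Fin d → ℍ[ℝ]) :
    (fun i => ∑ j, V i j * qip x (fun i' => V i' j)) = (V * Vᴴ) *ᵥ x := by
  rw [← mulVec_mulVec]; rfl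

theorem sum_qip_col_mul_qip_col (x y : Fin d → ℍ[ℝ]) :
    ∑ j, qip (fun i => V i j) y * qip x (fun i => V i j) = qip ((V * Vᴴ) *ᵥ x) y := by
  have hcol : ∀ j, qip (fun i => V i j) y = star ((Vᴴ *ᵥ y) j) := fun j => by
    rw [← qip_col, star_qip]
  simp only [hcol, qip_col]
  rw [← mulVec_mulVec, qip_mulVec_left]
  rfl

end Frame

/-- Equivalent characterisations of normalised tight frames for `ℍ^d`:
(i) Parseval identity, (ii) frame expansion, (ii') `V Vᴴ = I`, (iii) Plancherel
identity, (iv) the Gramian `P = Vᴴ V` is an orthogonal projection with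
`Re (trace P) = d`. -/
theorem normalised_tight_frame_tfae (d n : ℕ) (V : Matrix (Fin d) (Fin n) ℍ[ℝ]) :
    List.TFAE
      [ -- (i) normalised tight frame
        ∀ x : Fin d → ℍ[ℝ],
          ∑ j, Quaternion.normSq (qip x (fun i => V i j)) = nsq x,
        -- (ii) frame expansion
        ∀ x : Fin d → ℍ[ℝ],
          x = fun i => ∑ j, V i j * qip x (fun i' => V i' j),
        -- (ii) equivalently, `V Vᴴ = I`
        V * Vᴴ = 1,
        -- (iii) Plancherel identity
        ∀ x y : Fin d → ℍ[ℝ],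
          qip x y = ∑ j, qip (fun i => V i j) y * qip x (fun i => V i j),
        -- (iv) the Gramian is a rank `d` orthogonal projection
        (Vᴴ * V) * (Vᴴ * V) = Vᴴ * V ∧ (Vᴴ * V)ᴴ = Vᴴ * V ∧
          ((Vᴴ * V).trace).re = d ] := by
  simp only [sum_normSq_qip_col, sum_mul_qip_col, sum_qip_col_mul_qip_col]
  tfae_have 1 → 2 := fun h x => eq_of_forall_re_qip_eq fun y => by
    rw [← mulVec_mulVec, qip_mulVec_left, re_qip_mulVec_mulVec h]
  tfae_have 2 → 3 := fun h => ext_iff_mulVec.2 fun x => by rw [one_mulVec, ← h]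
  tfae_have 3 → 1 := fun h x => by
    rw [← re_qip_self, ← re_qip_self, ← qip_mulVec_left, mulVec_mulVec, h, one_mulVec]
  tfae_have 3 → 4 := fun h x y => by rw [h, one_mulVec]
  tfae_have 4 → 3 := fun h => ext_iff_mulVec.2 fun x => by
    rw [one_mulVec]; exact eq_of_forall_re_qip_eq fun y => by rw [h x y]
  tfae_have 3 → 5 := fun h => by
    refine ⟨?_, by simp [conjTranspose_mul], ?_⟩
    · rw [Matrix.mul_assoc, ← Matrix.mul_assoc V, h, Matrix.one_mul]
    · rw [re_trace_mul_comm, h, trace_one]; simp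
  tfae_have 5 → 3 := fun ⟨hP, _, htr⟩ => by
    refine eq_one_of_isHermitian_of_mul_self_eq (by simp [IsHermitian, conjTranspose_mul]) ?_ ?_
    · rw [← Matrix.mul_assoc, mul_conjTranspose_mul_self_eq_self hP]
    · rw [re_trace_mul_comm, htr, Fintype.card_fin]
  tfae_finish
end

section
/- Bounds on the number of vectors in a quaternionic equiangular tight frame: suppose d ≥ 2 and v_1, …, v_n ∈ ℍ^d are unit vectors with n > d + 1, equiangular (|⟨v_j, v_k⟩|² = λ for all j ≠ k) and tight (V·Vᴴ = (n/d)·I_d). Then d + 1/2 + (1/2)·√(2d + 1) ≤ n ≤ d + 2d(d − 1) = 2d² − d. -/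
open Quaternion Matrix BigOperators

/-!
Gerzon's argument: if `x_1, …, x_n ∈ ℍ^r` satisfy `|⟨x_j, x_j⟩|² = a` and `|⟨x_j, x_k⟩|² = c`
for `j ≠ k` with `0 ≤ c < a`, then the Hermitian matrices `x_j x_jᴴ` have real Gram matrix
`(a - c) I + c J` for the form `(A, B) ↦ Re tr (A Bᴴ)`, which is positive definite, so they are
linearly independent in the real space of Hermitian `r × r` quaternionic matrices, of dimension
`r + 4 · r(r-1)/2`. Applied to the frame itself (`r = d`, `λ < 1` by the frame identity
`1 + (n - 1) λ = n / d`) this is the upper bound. For the lower bound apply it to the columns of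
the Naimark complement `Q = I - (d/n) Vᴴ V`, an orthogonal projection whose rows span an
`(n - d)`-dimensional space and whose columns are again equiangular, with angle
`(d/n)² λ < (1 - d/n)²`; so `n ≤ (n - d) + 2 (n - d)(n - d - 1)`, which solves to the lower bound.
-/

instance : StarModule ℝ ℍ[ℝ] := ⟨fun r x => by simp⟩

theorem Quaternion.re_sum_s9 {ι : Type*} (s : Finset ι) (f : ι → ℍ[ℝ]) :
    (∑ i ∈ s, f i).re = ∑ i ∈ s, (f i).re :=
  map_sum (QuaternionAlgebra.reₗ (R := ℝ) (-1) 0 (-1)) f s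

theorem Quaternion.re_mul_comm_s9 (a b : ℍ[ℝ]) : (a * b).re = (b * a).re := by
  simp only [Quaternion.re_mul]; ring

theorem Finset.sum_univ_eq_add_card_sub_one_mul {ι : Type*} [Fintype ι] [DecidableEq ι]
    (f : ι → ℝ) (j : ι) {a c : ℝ} (hj : f j = a) (hoff : ∀ k, k ≠ j → f k = c) :
    ∑ k, f k = a + (Fintype.card ι - 1) * c := by
  rw [← Finset.add_sum_erase _ _ (Finset.mem_univ j), hj,
    Finset.sum_congr rfl fun k hk => hoff k (Finset.ne_of_mem_erase hk), Finset.sum_const,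
    Finset.card_erase_of_mem (Finset.mem_univ j), Finset.card_univ, nsmul_eq_mul,
    Nat.cast_sub (Fintype.card_pos_iff.mpr ⟨j⟩), Nat.cast_one]

theorem linearIndependent_of_forall_apply_eq {ι E : Type*} [Fintype ι] [AddCommGroup E]
    [Module ℝ E] (B : E →ₗ[ℝ] E →ₗ[ℝ] ℝ) (S : ι → E) {a c : ℝ} (hc : 0 ≤ c) (hca : c < a)
    (hdiag : ∀ j, B (S j) (S j) = a) (hoff : ∀ j k, j ≠ k → B (S j) (S k) = c) :
    LinearIndependent ℝ S := by
  classical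
  rw [Fintype.linearIndependent_iff]
  intro g hg
  have hrow : ∀ k, (a - c) * g k + c * ∑ j, g j = 0 := by
    intro k
    have h0 : ∑ j, g j * B (S j) (S k) = 0 := by
      simpa [map_sum] using congrArg (fun x => B x (S k)) hg
    rw [← Finset.add_sum_erase _ _ (Finset.mem_univ k), hdiag,
      Finset.sum_congr rfl fun j hj => by rw [hoff j k (Finset.ne_of_mem_erase hj)],
      ← Finset.sum_mul] at h0
    rw [← Finset.add_sum_erase _ g (Finset.mem_univ k)]
    linear_combination h0
  have hsum : ∑ j, g j = 0 := by
    have htotal : ((a - c) + Fintype.card ι * c) * ∑ j, g j = 0 := by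
      have := Finset.sum_eq_zero fun k (_ : k ∈ Finset.univ) => hrow k
      rw [Finset.sum_add_distrib, ← Finset.mul_sum, Finset.sum_const, Finset.card_univ,
        nsmul_eq_mul] at this
      linear_combination this
    exact (mul_eq_zero.mp htotal).resolve_left (by positivity)
  intro k
  simpa [hsum, (sub_pos.mpr hca).ne'] using hrow k

noncomputable def reFrobenius {m n : Type*} [Fintype m] [Fintype n] :
    Matrix m n ℍ[ℝ] →ₗ[ℝ] Matrix m n ℍ[ℝ] →ₗ[ℝ] ℝ :=
  LinearMap.mk₂ ℝ (fun A B => ∑ i, ∑ j, (A i j * star (B i j)).re)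
    (fun A A' B => by simp [add_mul, Finset.sum_add_distrib])
    (fun r A B => by simp [Finset.mul_sum])
    (fun A B B' => by simp [mul_add, Finset.sum_add_distrib])
    (fun r A B => by simp [Finset.mul_sum])

theorem reFrobenius_vecMulVec {d : ℕ} (x y : Fin d → ℍ[ℝ]) :
    reFrobenius (vecMulVec x (star x)) (vecMulVec y (star y)) =
      Quaternion.normSq (qip x y) := by
  simp only [reFrobenius, LinearMap.mk₂_apply, vecMulVec_apply, Pi.star_apply, star_mul,
    star_star, Quaternion.normSq_def, qip, star_sum, Finset.sum_mul_sum, Quaternion.re_sum_s9]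
  refine Finset.sum_congr rfl fun i _ => Finset.sum_congr rfl fun j _ => ?_
  simp only [mul_assoc]
  rw [Quaternion.re_mul_comm_s9 (star (y i))]
  simp only [mul_assoc]

noncomputable def selfAdjointCoords (m : Type*) [Fintype m] [LinearOrder m] :
    selfAdjoint.submodule ℝ (Matrix m m ℍ[ℝ]) →ₗ[ℝ]
      (m → ℝ) × ({p : m × m // p.1 < p.2} → ℍ[ℝ]) :=
  (LinearMap.prod
    (LinearMap.pi fun i => QuaternionAlgebra.reₗ (R := ℝ) (-1) 0 (-1) ∘ₗ entryLinearMap ℝ ℍ[ℝ] i i)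
    (LinearMap.pi fun p => entryLinearMap ℝ ℍ[ℝ] p.1.1 p.1.2)) ∘ₗ Submodule.subtype _

theorem selfAdjointCoords_injective (m : Type*) [Fintype m] [LinearOrder m] :
    Function.Injective (selfAdjointCoords m) := by
  rw [← LinearMap.ker_eq_bot, LinearMap.ker_eq_bot']
  rintro ⟨M, hM⟩ h
  have hM : Mᴴ = M := hM
  have hdiag : ∀ i, (M i i).re = 0 := fun i => congrFun (congrArg Prod.fst h) i
  have hupper : ∀ i j, i < j → M i j = 0 := fun i j hij => by
    simpa [selfAdjointCoords] using congrFun (congrArg Prod.snd h) ⟨(i, j), hij⟩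
  have hstar : ∀ i j, M j i = star (M i j) := fun i j => by
    rw [← conjTranspose_apply, hM]
  refine Subtype.ext (Matrix.ext fun i j => ?_)
  rcases lt_trichotomy i j with hij | rfl | hij
  · exact hupper i j hij
  · have := hstar i i
    rw [eq_comm, Quaternion.star_eq_self, hdiag] at this
    simpa using this
  · simp [hstar j i, hupper j i hij]

theorem finrank_selfAdjoint_matrix_le (m : Type*) [Fintype m] [LinearOrder m] :
    Module.finrank ℝ (selfAdjoint.submodule ℝ (Matrix m m ℍ[ℝ])) ≤
      Fintype.card m + 4 * (Fintype.card m).choose 2 := by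
  refine (LinearMap.finrank_le_finrank_of_injective (selfAdjointCoords_injective m)).trans_eq ?_
  rw [Module.finrank_prod, Module.finrank_fintype_fun_eq_card, Module.finrank_pi_fintype]
  simp [Quaternion.finrank_eq_four, Fintype.card_subtype, Fintype.card_product_filter_lt, mul_comm]

theorem card_le_of_linearIndependent_selfAdjoint {ι m : Type*} [Fintype ι] [Fintype m]
    [LinearOrder m] (X : ι → Matrix m m ℍ[ℝ]) (hX : ∀ j, (X j)ᴴ = X j)
    (hind : LinearIndependent ℝ X) :
    Fintype.card ι ≤ Fintype.card m + 4 * (Fintype.card m).choose 2 := by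
  let X' : ι → selfAdjoint.submodule ℝ (Matrix m m ℍ[ℝ]) := fun j => ⟨X j, hX j⟩
  have hind' : LinearIndependent ℝ X' := .of_comp (Submodule.subtype _) hind
  exact hind'.fintype_card_le_finrank.trans (finrank_selfAdjoint_matrix_le m)

noncomputable def conjugateBy {m n : Type*} [Fintype m] (U : Matrix n m ℍ[ℝ]) :
    Matrix m m ℍ[ℝ] →ₗ[ℝ] Matrix n n ℍ[ℝ] where
  toFun M := U * M * Uᴴ
  map_add' M N := by simp [Matrix.mul_add, Matrix.add_mul]
  map_smul' r M := by simp

theorem conjugateBy_vecMulVec {m n : Type*} [Fintype m] (U : Matrix n m ℍ[ℝ]) (x : m → ℍ[ℝ]) :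
    conjugateBy U (vecMulVec x (star x)) = vecMulVec (U *ᵥ x) (star (U *ᵥ x)) := by
  simp [conjugateBy, mul_vecMulVec, vecMulVec_mul, star_mulVec]

theorem card_le_of_equiangular {ι : Type*} [Fintype ι] {n r : ℕ} (U : Matrix (Fin n) (Fin r) ℍ[ℝ])
    (q : ι → Fin n → ℍ[ℝ]) (hq : ∀ j, ∃ x, U *ᵥ x = q j) {a c : ℝ} (hc : 0 ≤ c) (hca : c < a)
    (hdiag : ∀ j, Quaternion.normSq (qip (q j) (q j)) = a)
    (hoff : ∀ j k, j ≠ k → Quaternion.normSq (qip (q j) (q k)) = c) :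
    Fintype.card ι ≤ r + 4 * r.choose 2 := by
  choose x hx using hq
  have hq : LinearIndependent ℝ fun j => vecMulVec (q j) (star (q j)) :=
    linearIndependent_of_forall_apply_eq reFrobenius _ hc hca
      (fun j => by rw [reFrobenius_vecMulVec, hdiag])
      (fun j k hjk => by rw [reFrobenius_vecMulVec, hoff j k hjk])
  -- Linear independence pulls back along `M ↦ U M Uᴴ`, so the count happens in dimension `r`.
  have hx' : LinearIndependent ℝ fun j => vecMulVec (x j) (star (x j)) := by
    refine .of_comp (conjugateBy U) ?_
    simpa only [Function.comp_def, conjugateBy_vecMulVec, hx] using hq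
  simpa using card_le_of_linearIndependent_selfAdjoint _
    (fun j => by rw [conjTranspose_vecMulVec, star_star]) hx'

theorem qip_self {d : ℕ} (x : Fin d → ℍ[ℝ]) : qip x x = (nsq x : ℍ[ℝ]) := by
  simp only [qip, nsq, Quaternion.star_mul_self, ← Quaternion.algebraMap_def, map_sum]

theorem qip_col_of_conjTranspose_eq_of_mul_self {n : ℕ} {P : Matrix (Fin n) (Fin n) ℍ[ℝ]}
    (hP : Pᴴ = P) (hPP : P * P = P) (j k : Fin n) :
    qip (fun i => P i j) (fun i => P i k) = P k j := by
  have hstar : ∀ i, star (P i k) = P k i := fun i => by rw [← conjTranspose_apply, hP]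
  simp only [qip, hstar, ← Matrix.mul_apply, hPP]

theorem conjTranspose_mul_self_of_cols_apply {d n : ℕ} (v : Fin n → Fin d → ℍ[ℝ]) (j k : Fin n) :
    ((of fun i j => v j i)ᴴ * of fun i j => v j i) j k = qip (v k) (v j) := by
  simp [Matrix.mul_apply, qip]

theorem sum_normSq_conjTranspose_mul_self_apply {m n : Type*} [Fintype m] [Fintype n]
    [DecidableEq m] {V : Matrix m n ℍ[ℝ]} {c : ℝ} (hV : V * Vᴴ = c • 1) (j : n) :
    ∑ k, Quaternion.normSq ((Vᴴ * V) j k) = c * ((Vᴴ * V) j j).re := by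
  have hstar : ∀ k, star ((Vᴴ * V) j k) = (Vᴴ * V) k j := fun k => by
    rw [← conjTranspose_apply, conjTranspose_mul, conjTranspose_conjTranspose]
  have hGG : (Vᴴ * V) * (Vᴴ * V) = c • (Vᴴ * V) := by
    rw [Matrix.mul_assoc, ← Matrix.mul_assoc V, hV, Matrix.smul_mul, Matrix.one_mul,
      Matrix.mul_smul]
  simp only [Quaternion.normSq_def, hstar, ← Quaternion.re_sum_s9, ← Matrix.mul_apply, hGG,
    Matrix.smul_apply, Quaternion.re_smul, smul_eq_mul]

theorem eq_one_add_mul_of_tight_of_equiangular {d n : ℕ} {V : Matrix (Fin d) (Fin n) ℍ[ℝ]}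
    {c lam : ℝ} (hV : V * Vᴴ = c • 1) (hdiag : ∀ j, (Vᴴ * V) j j = 1)
    (hoff : ∀ j k, j ≠ k → Quaternion.normSq ((Vᴴ * V) j k) = lam) (j : Fin n) :
    c = 1 + (n - 1) * lam := by
  have hrow := sum_normSq_conjTranspose_mul_self_apply hV j
  rwa [Finset.sum_univ_eq_add_card_sub_one_mul _ j (by rw [hdiag, map_one])
    fun k hk => hoff j k hk.symm, hdiag, re_one, mul_one, Fintype.card_fin, eq_comm] at hrow

theorem exists_eq_mul_of_forall_row_mem {R m n : Type*} [DivisionRing R] [Fintype n] {r : ℕ}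
    (K : Submodule R (n → R)) (hK : Module.finrank R K = r) (M : Matrix m n R)
    (hM : ∀ j, M j ∈ K) : ∃ (X : Matrix m (Fin r) R) (B : Matrix (Fin r) n R), M = X * B := by
  subst hK
  let b := Module.finBasis R K
  refine ⟨of fun j a => b.repr ⟨M j, hM j⟩ a, of fun a => (b a : n → R), ?_⟩
  ext j i
  have := congrFun (congrArg Subtype.val (b.sum_repr ⟨M j, hM j⟩)) i
  rw [Submodule.coe_sum, Finset.sum_apply] at this
  simpa [Matrix.mul_apply] using this.symm

/-- When `V Vᴴ = c I`, the orthogonal projection onto the orthogonal complement of the column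
space of `Vᴴ`: the Naimark complement of the frame formed by the columns of `V`. -/
noncomputable def naimarkComplement {m n : Type*} [Fintype m] [DecidableEq n]
    (V : Matrix m n ℍ[ℝ]) (c : ℝ) : Matrix n n ℍ[ℝ] :=
  1 - c⁻¹ • (Vᴴ * V)

section NaimarkComplement

variable {m n : Type*} [Fintype m] [DecidableEq n] {V : Matrix m n ℍ[ℝ]} {c : ℝ}

theorem naimarkComplement_mul_conjTranspose [Fintype n] [DecidableEq m] (hc : c ≠ 0)
    (hV : V * Vᴴ = c • 1) : naimarkComplement V c * Vᴴ = 0 := by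
  rw [naimarkComplement, Matrix.sub_mul, Matrix.one_mul, Matrix.smul_mul, Matrix.mul_assoc, hV,
    Matrix.mul_smul, Matrix.mul_one, smul_smul, inv_mul_cancel₀ hc, one_smul, sub_self]

theorem conjTranspose_naimarkComplement : (naimarkComplement V c)ᴴ = naimarkComplement V c := by
  simp [naimarkComplement, conjTranspose_smul, Matrix.conjTranspose_mul]

theorem naimarkComplement_mul_self [Fintype n] [DecidableEq m] (hc : c ≠ 0)
    (hV : V * Vᴴ = c • 1) :
    naimarkComplement V c * naimarkComplement V c = naimarkComplement V c := by
  nth_rewrite 2 [naimarkComplement]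
  rw [Matrix.mul_sub, Matrix.mul_one, Matrix.mul_smul, ← Matrix.mul_assoc,
    naimarkComplement_mul_conjTranspose hc hV, Matrix.zero_mul, smul_zero, sub_zero]

end NaimarkComplement

theorem exists_mulVec_eq_naimarkComplement_col {d n : ℕ} {V : Matrix (Fin d) (Fin n) ℍ[ℝ]}
    {c : ℝ} (hc : c ≠ 0) (hV : V * Vᴴ = c • 1) :
    ∃ U : Matrix (Fin n) (Fin (n - d)) ℍ[ℝ], ∀ j,
      ∃ x, U *ᵥ x = fun i => naimarkComplement V c i j := by
  have hsurj : Function.Surjective Vᴴ.vecMulLinear := fun z => ⟨c⁻¹ • (z ᵥ* V), by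
    rw [vecMulLinear_apply, smul_vecMul, vecMul_vecMul, hV, vecMul_smul, vecMul_one, smul_smul,
      inv_mul_cancel₀ hc, one_smul]⟩
  have hK : Module.finrank ℍ[ℝ] (LinearMap.ker Vᴴ.vecMulLinear) = n - d := by
    have := LinearMap.finrank_range_add_finrank_ker Vᴴ.vecMulLinear
    rw [LinearMap.range_eq_top.2 hsurj, finrank_top, Module.finrank_fin_fun,
      Module.finrank_fin_fun] at this
    omega
  obtain ⟨X, B, hXB⟩ := exists_eq_mul_of_forall_row_mem _ hK (naimarkComplement V c) fun j =>
    congrFun (naimarkComplement_mul_conjTranspose hc hV) j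
  have hBX : naimarkComplement V c = Bᴴ * Xᴴ := by
    rw [← conjTranspose_naimarkComplement, hXB, conjTranspose_mul]
  exact ⟨Bᴴ, fun j => ⟨star (X j), by rw [hBX]; rfl⟩⟩

theorem card_le_of_naimarkComplement {d n : ℕ} {V : Matrix (Fin d) (Fin n) ℍ[ℝ]} {c lam : ℝ}
    (hc : c ≠ 0) (hV : V * Vᴴ = c • 1) (hdiag : ∀ j, (Vᴴ * V) j j = 1)
    (hoff : ∀ j k, j ≠ k → Quaternion.normSq ((Vᴴ * V) j k) = lam) (hlam : 0 ≤ lam)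
    (hgap : c⁻¹ ^ 2 * lam < (1 - c⁻¹) ^ 2) :
    n ≤ (n - d) + 4 * (n - d).choose 2 := by
  obtain ⟨U, hU⟩ := exists_mulVec_eq_naimarkComplement_col hc hV
  have hcol := qip_col_of_conjTranspose_eq_of_mul_self conjTranspose_naimarkComplement
    (naimarkComplement_mul_self hc hV)
  have hQdiag : ∀ j, naimarkComplement V c j j = (1 - c⁻¹) • 1 := fun j => by
    rw [naimarkComplement, Matrix.sub_apply, Matrix.smul_apply, hdiag, one_apply_eq, sub_smul,
      one_smul]
  have hQoff : ∀ j k, j ≠ k → naimarkComplement V c k j = -(c⁻¹ • (Vᴴ * V) k j) := by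
    intro j k hjk
    rw [naimarkComplement, Matrix.sub_apply, Matrix.smul_apply, one_apply_ne hjk.symm, zero_sub]
  simpa using card_le_of_equiangular U _ hU (by positivity) hgap
    (fun j => by rw [hcol, hQdiag, Quaternion.normSq_smul, map_one, mul_one])
    (fun j k hjk => by
      rw [hcol, hQoff j k hjk, Quaternion.normSq_neg, Quaternion.normSq_smul, hoff k j hjk.symm])

theorem angle_lt_one_of_frame {d n lam : ℝ} (hd : 1 < d) (hn : 1 < n)
    (hframe : n = d * (1 + (n - 1) * lam)) : lam < 1 := by
  by_contra! h
  nlinarith [mul_le_mul_of_nonneg_left h (by nlinarith : (0 : ℝ) ≤ d * (n - 1))]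

theorem complement_angle_lt_of_frame {d n lam : ℝ} (hd : 0 < d) (hn : d + 1 < n)
    (hframe : n = d * (1 + (n - 1) * lam)) : (d / n) ^ 2 * lam < (1 - d / n) ^ 2 := by
  have hn0 : 0 < n := by linarith
  have hkey : d ^ 2 * lam * (n - 1) < (n - d) ^ 2 * (n - 1) := by
    have h1 : d ^ 2 * lam * (n - 1) = d * (n - d) := by linear_combination -d * hframe
    have h2 : d < (n - d) * (n - 1) := by nlinarith
    rw [h1]
    nlinarith
  rw [one_sub_div hn0.ne', div_pow, div_pow, div_mul_eq_mul_div,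
    div_lt_div_iff_of_pos_right (by positivity)]
  exact lt_of_mul_lt_mul_right hkey (by linarith)

/-- Bounds on the number of vectors of a quaternionic equiangular tight frame:
if `d ≥ 2`, `n > d + 1`, and `v_1, …, v_n ∈ ℍ^d` are equiangular unit vectors
forming a tight frame (`V Vᴴ = (n/d) I_d`), then
`d + 1/2 + (1/2)√(2d+1) ≤ n ≤ d + 2d(d−1) = 2d² − d`. -/
theorem equiangular_tight_frame_vector_bounds (d n : ℕ) (hd : 2 ≤ d)
    (hn : d + 1 < n) (lam : ℝ)
    (v : Fin n → (Fin d → ℍ[ℝ]))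
    (hunit : ∀ j, nsq (v j) = 1)
    (hequi : ∀ j k, j ≠ k → Quaternion.normSq (qip (v j) (v k)) = lam)
    (htight : (Matrix.of fun i j => v j i) * (Matrix.of fun i j => v j i)ᴴ =
      ((n : ℝ) / (d : ℝ)) • (1 : Matrix (Fin d) (Fin d) ℍ[ℝ])) :
    (d : ℝ) + 1 / 2 + (1 / 2) * Real.sqrt (2 * (d : ℝ) + 1) ≤ (n : ℝ) ∧
    (n : ℝ) ≤ (d : ℝ) + 2 * (d : ℝ) * ((d : ℝ) - 1) := by
  have hD : (2 : ℝ) ≤ d := by exact_mod_cast hd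
  have hN : (d : ℝ) + 2 ≤ n := by exact_mod_cast hn
  have hc : (n : ℝ) / d ≠ 0 := (div_pos (by linarith) (by linarith)).ne'
  set V : Matrix (Fin d) (Fin n) ℍ[ℝ] := of fun i j => v j i
  have hgram : ∀ j k, (Vᴴ * V) j k = qip (v k) (v j) := conjTranspose_mul_self_of_cols_apply v
  have hself : ∀ j, qip (v j) (v j) = 1 := fun j => by rw [qip_self, hunit, Quaternion.coe_one]
  have hdiag : ∀ j, (Vᴴ * V) j j = 1 := fun j => by rw [hgram, hself]
  have hoff : ∀ j k, j ≠ k → Quaternion.normSq ((Vᴴ * V) j k) = lam := fun j k hjk => by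
    rw [hgram, hequi k j hjk.symm]
  have hframe : (n : ℝ) = d * (1 + (n - 1) * lam) := by
    rw [← eq_one_add_mul_of_tight_of_equiangular htight hdiag hoff ⟨0, by omega⟩]
    field_simp
  have hlam0 : 0 ≤ lam := hequi ⟨0, by omega⟩ ⟨1, by omega⟩ (by simp) ▸ Quaternion.normSq_nonneg
  constructor
  · have hcount := (Nat.cast_le (α := ℝ)).2 <|
      card_le_of_naimarkComplement hc htight hdiag hoff hlam0 <| by
        rw [inv_div]; exact complement_angle_lt_of_frame (by linarith) (by linarith) hframe
    push_cast [Nat.cast_choose_two, Nat.cast_sub (by omega : d ≤ n)] at hcount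
    have hsqrt : √(2 * (d : ℝ) + 1) ≤ 2 * (n - d) - 1 :=
      Real.sqrt_le_iff.2 ⟨by linarith, by nlinarith⟩
    linarith
  · have hcount := (Nat.cast_le (α := ℝ)).2 <| card_le_of_equiangular 1 v
      (fun j => ⟨v j, one_mulVec _⟩) hlam0
      (angle_lt_one_of_frame (by linarith) (by linarith) hframe)
      (fun j => by rw [hself, map_one]) hequi
    push_cast [Fintype.card_fin, Nat.cast_choose_two] at hcount
    linarith
end
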